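/- arXiv:1608.02503 — 4 statements merged into one kernel-verified Lean document; each statement's English description precedes it below -/
import Mathlib

section
/- A complex matrix C is coninvolutory (\bar{C}C = I_n) if and only if there exists an invertible complex matrix S such that C = \bar{S}^{-1}S. -/
open Polynomial Matrix Complex

theorem coninvolutory_iff_consimilar_id (n : ℕ) (C : Matrix (Fin n) (Fin n) ℂ) :
    C.map (starRingEnd ℂ) * C = 1 ↔
      ∃ S : Matrix (Fin n) (Fin n) ℂ, IsUnit S.det ∧ C = (S.map (starRingEnd ℂ))⁻¹ * S := by
  have detmap : ∀ (M : Matrix (Fin n) (Fin n) ℂ),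
      (M.map (starRingEnd ℂ)).det = starRingEnd ℂ M.det :=
    fun M => ((starRingEnd ℂ).map_det M).symm
  constructor
  · intro hC
    have hdetC : C.det ≠ 0 := by
      intro h
      have h2 := congrArg Matrix.det hC
      rw [Matrix.det_mul, h, mul_zero, Matrix.det_one] at h2
      exact one_ne_zero h2.symm
    set P : ℂ[X] := Matrix.det
        ((X + Polynomial.C I) • C.map Polynomial.C + (X - Polynomial.C I) • 1) with hPdef
    have hev : ∀ a : ℂ, P.eval a = Matrix.det ((a + I) • C + (a - I) • (1 : Matrix (Fin n) (Fin n) ℂ)) := by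
      intro a
      rw [hPdef, ← Polynomial.coe_evalRingHom, RingHom.map_det]
      congr 1
      ext i j
      by_cases h : i = j <;>
        simp [Matrix.map_apply, Matrix.add_apply, Matrix.smul_apply, Matrix.one_apply, h]
    have hPne : P ≠ 0 := by
      intro h
      have h2 : P.eval I = 0 := by rw [h]; simp
      rw [hev I] at h2
      have he : (I + I) • C + (I - I) • (1 : Matrix (Fin n) (Fin n) ℂ) = (2 * I) • C := by
        rw [sub_self, zero_smul, add_zero, two_mul]
      rw [he, Matrix.det_smul, Fintype.card_fin] at h2
      have h2I : (2 * I : ℂ) ≠ 0 := by simp [Complex.I_ne_zero]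
      exact (mul_ne_zero (pow_ne_zero n h2I) hdetC) h2
    have hfin : Set.Finite { x : ℂ | P.IsRoot x } := Polynomial.finite_setOf_isRoot hPne
    have hex : ∃ t : ℝ, P.eval (t : ℂ) ≠ 0 := by
      by_contra h
      push_neg at h
      have hsub : Set.range ((↑) : ℝ → ℂ) ⊆ { x : ℂ | P.IsRoot x } := by
        rintro x ⟨t, rfl⟩
        exact h t
      exact Set.infinite_range_of_injective Complex.ofReal_injective (hfin.subset hsub)
    obtain ⟨t, ht⟩ := hex
    set α : ℂ := (t : ℂ) + I with hα
    have hconj : starRingEnd ℂ α = (t : ℂ) - I := by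
      simp [hα, sub_eq_add_neg, Complex.conj_I]
    set S : Matrix (Fin n) (Fin n) ℂ := α • C + (starRingEnd ℂ α) • 1 with hSdef
    have hdetS : S.det ≠ 0 := by
      rw [hSdef, hconj, hα, ← hev t]; exact ht
    have hSmap : S.map (starRingEnd ℂ) =
        (starRingEnd ℂ α) • C.map (starRingEnd ℂ) + α • 1 := by
      ext i j
      by_cases h : i = j <;>
        simp [hSdef, Matrix.map_apply, Matrix.add_apply, Matrix.smul_apply, Matrix.one_apply, h]
    have hS : S.map (starRingEnd ℂ) * C = S := by
      rw [hSmap, add_mul, smul_mul_assoc, smul_mul_assoc, hC, one_mul, hSdef, add_comm]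
    have hdetSmap : IsUnit (S.map (starRingEnd ℂ)).det := by
      rw [detmap]
      exact isUnit_iff_ne_zero.mpr (by simpa using hdetS)
    refine ⟨S, isUnit_iff_ne_zero.mpr hdetS, ?_⟩
    calc C = (S.map (starRingEnd ℂ))⁻¹ * (S.map (starRingEnd ℂ) * C) := by
            rw [← mul_assoc, Matrix.nonsing_inv_mul _ hdetSmap, one_mul]
      _ = (S.map (starRingEnd ℂ))⁻¹ * S := by rw [hS]
  · rintro ⟨S, hS, rfl⟩
    set T : Matrix (Fin n) (Fin n) ℂ := S.map (starRingEnd ℂ) with hT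
    have hTS : T.map (starRingEnd ℂ) = S := by
      ext i j; simp [hT, Matrix.map_apply]
    have hTdet : IsUnit T.det := by
      rw [hT, detmap]
      exact hS.map (starRingEnd ℂ)
    have hinv : (T⁻¹).map (starRingEnd ℂ) = S⁻¹ := by
      refine (Matrix.inv_eq_left_inv ?_).symm
      calc (T⁻¹).map (starRingEnd ℂ) * S
          = (T⁻¹).map (starRingEnd ℂ) * T.map (starRingEnd ℂ) := by rw [hTS]
        _ = (T⁻¹ * T).map (starRingEnd ℂ) := (Matrix.map_mul).symm
        _ = 1 := by rw [Matrix.nonsing_inv_mul _ hTdet]; ext i j;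
                    by_cases h : i = j <;> simp [Matrix.map_apply, Matrix.one_apply, h]
    have hmapC : (T⁻¹ * S).map (starRingEnd ℂ) = S⁻¹ * T := by
      rw [Matrix.map_mul, hinv, ← hT]
    rw [hmapC, mul_assoc, ← mul_assoc T, Matrix.mul_nonsing_inv _ hTdet, one_mul,
      Matrix.nonsing_inv_mul _ hS]
end

section
/- Every real diagonal 2×2 matrix diag(a, b) is a sum of 4 skew-coninvolutory 2×2 complex matrices. -/
open Complex Matrix

theorem real_diag_sum_four_skew_coninvolutory (a b : ℝ) :
    ∃ M : Fin 4 → Matrix (Fin 2) (Fin 2) ℂ,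
      (∀ i, (M i).map (starRingEnd ℂ) * M i = -1) ∧
      !![(a : ℂ), 0; 0, (b : ℂ)] = ∑ i, M i := by
  set d : ℂ := (((a + b) / 4 : ℝ) : ℂ) with hd
  set p : ℂ := (((a - b) / 4 : ℝ) : ℂ) with hp
  have hdc : (starRingEnd ℂ) d = d := Complex.conj_ofReal _
  have hpc : (starRingEnd ℂ) p = p := Complex.conj_ofReal _
  refine ⟨![!![d, I; -I * (1 + d^2), d],
            !![d, -I; I * (1 + d^2), d],
            !![p, 1; -(1 + p^2), -p],
            !![p, -1; 1 + p^2, -p]], ?_, ?_⟩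
  · intro i
    fin_cases i <;>
      · ext i j
        fin_cases i <;> fin_cases j <;>
          simp [Matrix.mul_apply, Fin.sum_univ_succ, hdc, hpc, map_pow] <;>
          ring_nf <;>
          simp [Complex.I_sq]
  · ext i j
    have ha : (a : ℂ) = d + d + (p + p) := by
      rw [hd, hp]; push_cast; ring
    have hb : (b : ℂ) = d + d - (p + p) := by
      rw [hd, hp]; push_cast; ring
    fin_cases i <;> fin_cases j <;>
      simp [Fin.sum_univ_succ, ha, hb] <;> ring
end

section
/- Every 2×2 complex matrix is a sum of 4 coninvolutory matrices. -/
open Matrix Complex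

noncomputable def Mc (α : ℂ) (β γ : ℝ) : Matrix (Fin 2) (Fin 2) ℂ :=
  !![α, I*β; I*γ, (starRingEnd ℂ) α]

noncomputable def Mc2 (α : ℂ) (β γ : ℝ) : Matrix (Fin 2) (Fin 2) ℂ :=
  !![I*α, -(β:ℂ); -(γ:ℂ), I * (starRingEnd ℂ) α]

lemma Mc_con (α : ℂ) (β γ : ℝ) (h : β*γ = 1 - Complex.normSq α) :
    (Mc α β γ).map (starRingEnd ℂ) * Mc α β γ = 1 := by
  have hC : (β:ℂ)*γ = 1 - (starRingEnd ℂ) α * α := by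
    have := congrArg (Complex.ofReal) h
    push_cast at this
    rw [this, Complex.normSq_eq_conj_mul_self]
  ext i j
  fin_cases i <;> fin_cases j <;>
    simp [Mc, Matrix.mul_apply, Fin.sum_univ_two, Matrix.one_apply]
  · linear_combination hC - (β*γ:ℂ)*Complex.I_sq
  · ring
  · ring
  · linear_combination hC - (β*γ:ℂ)*Complex.I_sq

lemma Mc2_con (α : ℂ) (β γ : ℝ) (h : β*γ = 1 - Complex.normSq α) :
    (Mc2 α β γ).map (starRingEnd ℂ) * Mc2 α β γ = 1 := by
  have hC : (β:ℂ)*γ = 1 - (starRingEnd ℂ) α * α := by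
    have := congrArg (Complex.ofReal) h
    push_cast at this
    rw [this, Complex.normSq_eq_conj_mul_self]
  ext i j
  fin_cases i <;> fin_cases j <;>
    simp [Mc2, Matrix.mul_apply, Fin.sum_univ_two, Matrix.one_apply]
  · linear_combination hC - ((starRingEnd ℂ) α * α)*Complex.I_sq
  · ring
  · ring
  · linear_combination hC - ((starRingEnd ℂ) α * α)*Complex.I_sq

lemma pairP (u : ℂ) (B G : ℝ) : ∃ (α1 α2 : ℂ) (β1 β2 γ1 γ2 : ℝ),
    α1 + α2 = u ∧ β1 + β2 = B ∧ γ1 + γ2 = G ∧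
    β1*γ1 = 1 - Complex.normSq α1 ∧ β2*γ2 = 1 - Complex.normSq α2 := by
  by_cases hB : B = 0
  · by_cases hG : G = 0
    · exact ⟨u/2, u/2, 1, -1, 1 - Complex.normSq (u/2), -(1 - Complex.normSq (u/2)),
        by ring, by rw [hB]; ring, by rw [hG]; ring, by ring, by ring⟩
    · exact ⟨u-1, 1, (1 - Complex.normSq (u-1))/G, -((1 - Complex.normSq (u-1))/G), G, 0,
        by ring, by rw [hB]; ring, by ring, by field_simp, by simp⟩
  · exact ⟨u-1, 1, B, 0, (1 - Complex.normSq (u-1))/B, G - (1 - Complex.normSq (u-1))/B,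
      by ring, by ring, by ring, by field_simp, by simp⟩

theorem two_by_two_sum_four_coninvolutory (A : Matrix (Fin 2) (Fin 2) ℂ) :
    ∃ C : Fin 4 → Matrix (Fin 2) (Fin 2) ℂ,
      (∀ i, (C i).map (starRingEnd ℂ) * C i = 1) ∧ A = ∑ i, C i := by
  obtain ⟨α1, α2, β1, β2, γ1, γ2, hα, hβ, hγ, h1, h2⟩ :=
    pairP ((A 0 0 + (starRingEnd ℂ) (A 1 1))/2) ((A 0 1).im) ((A 1 0).im)
  obtain ⟨α3, α4, β3, β4, γ3, γ4, hα', hβ', hγ', h3, h4⟩ :=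
    pairP (I * ((starRingEnd ℂ) (A 1 1) - A 0 0)/2) (-(A 0 1).re) (-(A 1 0).re)
  refine ⟨![Mc α1 β1 γ1, Mc α2 β2 γ2, Mc2 α3 β3 γ3, Mc2 α4 β4 γ4], ?_, ?_⟩
  · intro i
    fin_cases i
    · exact Mc_con _ _ _ h1
    · exact Mc_con _ _ _ h2
    · exact Mc2_con _ _ _ h3
    · exact Mc2_con _ _ _ h4
  · have hαc := congrArg (starRingEnd ℂ) hα
    have hα'c := congrArg (starRingEnd ℂ) hα'
    simp only [map_add, map_div₀, _root_.map_mul, map_sub, Complex.conj_I, Complex.conj_conj,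
      map_ofNat] at hαc hα'c
    have hβC : (β1:ℂ) + β2 = ((A 0 1).im : ℂ) := by exact_mod_cast congrArg Complex.ofReal hβ
    have hβ'C : (β3:ℂ) + β4 = (-(A 0 1).re : ℂ) := by exact_mod_cast congrArg Complex.ofReal hβ'
    have hγC : (γ1:ℂ) + γ2 = ((A 1 0).im : ℂ) := by exact_mod_cast congrArg Complex.ofReal hγ
    have hγ'C : (γ3:ℂ) + γ4 = (-(A 1 0).re : ℂ) := by exact_mod_cast congrArg Complex.ofReal hγ'
    ext i j
    rw [Fin.sum_univ_four]
    fin_cases i <;> fin_cases j <;> simp [Mc, Mc2]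
    · linear_combination -hα - Complex.I*hα' - (((starRingEnd ℂ) (A 1 1) - A 0 0)/2)*Complex.I_sq
    · linear_combination hβ'C - Complex.I*hβC - Complex.re_add_im (A 0 1)
    · linear_combination hγ'C - Complex.I*hγC - Complex.re_add_im (A 1 0)
    · linear_combination -hαc - Complex.I*hα'c + ((A 1 1 - (starRingEnd ℂ) (A 0 0))/2)*Complex.I_sq
end

section
/- Every 2m×2m complex matrix is a sum of at most 5 skew-coninvolutory matrices. -/
/-!
Write the matrix in `m × m` blocks. For real `r ≠ 0` the block matrix
`[[X̄, r], [-(1 + X X̄) / r, -X]]` is skew-coninvolutory, and so are its conjugate by the block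
swap, its unimodular multiples, and `[[0, conj G⁻¹], [-G, 0]]` for invertible `G`. Taking the
first with `X` and `I` times the swapped one with `Y`, for suitable `X`, `Y` built from the
diagonal blocks, matches the diagonal; the off-diagonal blocks then require units `G`, `G'`
with `G + G' = S` and `G⁻¹ + G'⁻¹ = P`, where `S = I r + O(1)` and `P = -r + O(1)`.
For invertible `P` this holds with `G = P⁻¹ (1 + Λ)`, `G' = P⁻¹ Λ⁻¹ (1 + Λ)` as soon as
`Λ + Λ⁻¹ = P S - 2`. Since `P S - 2 = -I r² + O(r)` has a small inverse for large `r`, such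
a `Λ` is the fixed point of the contraction `Λ ↦ (P S - 2)⁻¹ (1 + Λ²)` on the ball of
radius `1 / 2`.
-/

open ComplexConjugate Metric

theorem Units.exists_add_eq_and_inv_add_eq_of_add_inv_eq {A : Type*} [Ring A] (P Λ : Aˣ)
    (hΛ : IsUnit (1 + (Λ : A))) {S : A} (hS : ↑P * S - 2 = ↑Λ + ↑Λ⁻¹) :
    ∃ G G' : Aˣ, (G : A) + G' = S ∧ (↑G⁻¹ : A) + ↑G'⁻¹ = P := by
  obtain ⟨U, hU⟩ := hΛ
  -- `(1 + Λ⁻¹) (1 + Λ) = 2 + Λ + Λ⁻¹ = P S`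
  refine ⟨P⁻¹ * U, P⁻¹ * Λ⁻¹ * U, ?_, ?_⟩
  · calc ((P⁻¹ * U : Aˣ) : A) + ↑(P⁻¹ * Λ⁻¹ * U)
        = ↑P⁻¹ * (2 + Λ + ↑Λ⁻¹ + (↑Λ⁻¹ * Λ - 1)) := by
          simp only [Units.val_mul, hU]; noncomm_ring
      _ = S := by rw [Units.inv_mul, sub_self, add_zero, add_assoc, ← hS, add_sub_cancel,
          ← mul_assoc, Units.inv_mul, one_mul]
  · calc (↑(P⁻¹ * U)⁻¹ : A) + ↑(P⁻¹ * Λ⁻¹ * U)⁻¹ = ↑U⁻¹ * (1 + Λ) * P := by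
          simp only [mul_inv_rev, inv_inv, Units.val_mul]; noncomm_ring
      _ = P := by rw [← hU, Units.inv_mul, one_mul]

section NormedRing

variable {A : Type*} [NormedRing A] [NormOneClass A] [CompleteSpace A]

theorem exists_add_inv_eq_of_norm_inv_le (N : Aˣ) (hN : ‖(↑N⁻¹ : A)‖ ≤ 1 / 3) :
    ∃ Λ : Aˣ, (Λ : A) + ↑Λ⁻¹ = N ∧ ‖(Λ : A)‖ ≤ 1 / 2 := by
  set ε : A := ↑N⁻¹
  set f : A → A := fun x ↦ ε * (1 + x ^ 2)
  have hmaps : Set.MapsTo f (closedBall 0 (1 / 2)) (closedBall 0 (1 / 2)) := by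
    intro x hx
    rw [mem_closedBall_zero_iff] at hx ⊢
    calc ‖f x‖ ≤ ‖ε‖ * (1 + ‖x‖ ^ 2) := by
          grw [norm_mul_le, norm_add_le, norm_one, norm_pow_le]
      _ ≤ 1 / 3 * (1 + (1 / 2) ^ 2) := by gcongr
      _ ≤ 1 / 2 := by norm_num
  have hlip : LipschitzOnWith (1 / 3) f (closedBall 0 (1 / 2)) := by
    refine LipschitzOnWith.of_dist_le_mul fun x hx y hy ↦ ?_
    rw [mem_closedBall_zero_iff] at hx hy
    have : f x - f y = ε * (x * (x - y) + (x - y) * y) := by simp only [f]; noncomm_ring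
    rw [dist_eq_norm, dist_eq_norm, this]
    calc ‖ε * (x * (x - y) + (x - y) * y)‖ ≤ ‖ε‖ * (‖x‖ * ‖x - y‖ + ‖x - y‖ * ‖y‖) := by
          grw [norm_mul_le, norm_add_le, norm_mul_le, norm_mul_le]
      _ ≤ 1 / 3 * (1 / 2 * ‖x - y‖ + ‖x - y‖ * (1 / 2)) := by gcongr
      _ = ((1 / 3 : NNReal) : ℝ) * ‖x - y‖ := by push_cast; ring
  have hcontr : ContractingWith (1 / 3) (hmaps.restrict f _ _) :=
    ⟨by norm_num, hlip.mapsToRestrict hmaps⟩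
  -- a fixed point satisfies `N Λ = 1 + Λ ^ 2`, that is, `Λ + Λ⁻¹ = N`
  obtain ⟨Λ, hΛ, hfix, -⟩ := hcontr.exists_fixedPoint' isClosed_closedBall.isComplete hmaps
    (mem_closedBall_self (by norm_num : (0 : ℝ) ≤ 1 / 2)) (edist_ne_top _ _)
  have hΛ' : ‖Λ‖ ≤ 1 / 2 := mem_closedBall_zero_iff.1 hΛ
  have hsq : ‖-Λ ^ 2‖ < 1 := by
    grw [norm_neg, norm_pow_le, hΛ']
    norm_num
  let W : Aˣ := Units.oneSub (-Λ ^ 2) hsq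
  replace hfix : ε * (1 + Λ ^ 2) = Λ := hfix
  have hval : ((N⁻¹ * W : Aˣ) : A) = Λ := by
    rw [Units.val_mul, Units.val_oneSub, sub_neg_eq_add, hfix]
  have hNΛ : (N : A) * Λ = 1 + Λ ^ 2 := by
    calc (N : A) * Λ = N * (ε * (1 + Λ ^ 2)) := by rw [hfix]
      _ = 1 + Λ ^ 2 := by rw [← mul_assoc, Units.mul_inv, one_mul]
  have hinv : ((N⁻¹ * W)⁻¹ : Aˣ) = (N : A) - Λ := by
    refine Units.inv_eq_of_mul_eq_one_left ?_
    rw [hval, sub_mul, hNΛ]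
    noncomm_ring
  refine ⟨N⁻¹ * W, ?_, hval ▸ hΛ'⟩
  rw [hval, hinv]
  abel

end NormedRing

section NormedAlgebra

variable {𝕜 A : Type*} [NormedField 𝕜] [NormedRing A] [NormOneClass A] [NormedAlgebra 𝕜 A]
  [CompleteSpace A]

theorem exists_unit_eq_of_norm_sub_smul_one_le {c : 𝕜} (hc : c ≠ 0) {x : A}
    (hx : ‖x - c • 1‖ ≤ ‖c‖ / 2) : ∃ u : Aˣ, (u : A) = x ∧ ‖(↑u⁻¹ : A)‖ ≤ 2 / ‖c‖ := by
  set t : A := c⁻¹ • (c • 1 - x)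
  have hc' : 0 < ‖c‖ := norm_pos_iff.2 hc
  have ht : ‖t‖ ≤ 1 / 2 := by
    rw [norm_smul, norm_inv, norm_sub_rev, inv_mul_le_iff₀ hc']
    linarith
  have ht1 : ‖t‖ < 1 := by linarith
  let v : Aˣ := Units.oneSub t ht1
  refine ⟨Units.map (algebraMap 𝕜 A).toMonoidHom (Units.mk0 c hc) * v, ?_, ?_⟩
  · simp [v, t, Algebra.algebraMap_eq_smul_one, smul_sub, smul_smul, hc]
  · have hv : ‖(↑v⁻¹ : A)‖ ≤ 2 := by
      have hsum := tsum_geometric_le_of_norm_lt_one t ht1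
      rw [norm_one, sub_self, zero_add] at hsum
      exact hsum.trans (inv_le_of_inv_le₀ (by norm_num) (by linarith))
    calc ‖(↑(Units.map (algebraMap 𝕜 A).toMonoidHom (Units.mk0 c hc) * v)⁻¹ : A)‖
        = ‖(↑v⁻¹ : A) * algebraMap 𝕜 A c⁻¹‖ := by simp
      _ ≤ 2 * ‖c‖⁻¹ := by
        grw [norm_mul_le, hv, norm_algebraMap', norm_inv]
      _ = 2 / ‖c‖ := by rw [div_eq_mul_inv]

theorem exists_units_add_eq_and_inv_add_eq_of_norm_le {K : ℝ} {a b : 𝕜}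
    (ha : 8 * (K + 1) ≤ ‖a‖) (hb : 8 * (K + 1) ≤ ‖b‖) {p s : A} (hp : ‖p‖ ≤ K) (hs : ‖s‖ ≤ K) :
    ∃ G G' : Aˣ, (G : A) + G' = s + b • 1 ∧ (↑G⁻¹ : A) + ↑G'⁻¹ = p + a • 1 := by
  have hK : 0 ≤ K := (norm_nonneg p).trans hp
  have ha0 : a ≠ 0 := norm_pos_iff.1 (by linarith)
  have hb0 : b ≠ 0 := norm_pos_iff.1 (by linarith)
  obtain ⟨P, hP, -⟩ := exists_unit_eq_of_norm_sub_smul_one_le ha0 (x := p + a • 1)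
    (by rw [add_sub_cancel_right]; linarith)
  have h2 : ‖(2 : A)‖ ≤ 2 := by simpa using Nat.norm_cast_le (α := A) 2
  have hN : ‖(p + a • 1) * (s + b • 1) - 2 - (a * b) • 1‖ ≤ ‖a * b‖ / 2 := by
    have : (p + a • 1) * (s + b • 1) - 2 - (a * b) • (1 : A) = p * s + b • p + a • s - 2 := by
      simp only [add_mul, mul_add, smul_mul_assoc, mul_smul_comm, one_mul, mul_one]
      module
    rw [this, norm_mul]
    grw [norm_sub_le, norm_add_le, norm_add_le, norm_mul_le, norm_smul, norm_smul, hp, hs, h2]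
    nlinarith [mul_le_mul ha hb (by positivity) (norm_nonneg a)]
  obtain ⟨N, hNval, hNinv⟩ := exists_unit_eq_of_norm_sub_smul_one_le (mul_ne_zero ha0 hb0) hN
  obtain ⟨Λ, hΛN, hΛ⟩ := exists_add_inv_eq_of_norm_inv_le N (by
    grw [hNinv, norm_mul]
    rw [div_le_div_iff₀ (by positivity) (by norm_num)]
    nlinarith [mul_le_mul ha hb (by positivity) (norm_nonneg a)])
  obtain ⟨U, hU, -⟩ := exists_unit_eq_of_norm_sub_smul_one_le (one_ne_zero (α := 𝕜))
    (x := 1 + (Λ : A)) (by rwa [one_smul, add_sub_cancel_left, norm_one])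
  rw [← hP]
  exact Units.exists_add_eq_and_inv_add_eq_of_add_inv_eq P Λ ⟨U, hU⟩ (by rw [hP, ← hNval, hΛN])

end NormedAlgebra

namespace Matrix

section Conj

variable {l m : Type*}

@[simp]
theorem map_conj_map_conj (M : Matrix l m ℂ) : (M.map conj).map conj = M := by
  ext; simp

@[simp]
theorem map_conj_add (M N : Matrix l m ℂ) : (M + N).map conj = M.map conj + N.map conj :=
  Matrix.map_add _ (map_add _) M N

@[simp]
theorem map_conj_sub (M N : Matrix l m ℂ) : (M - N).map conj = M.map conj - N.map conj :=
  Matrix.map_sub _ (map_sub _) M N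

@[simp]
theorem map_conj_neg (M : Matrix l m ℂ) : (-M).map conj = -M.map conj :=
  Matrix.map_neg _ (map_neg _) M

@[simp]
theorem map_conj_smul (c : ℂ) (M : Matrix l m ℂ) : (c • M).map conj = conj c • M.map conj := by
  ext; simp

@[simp]
theorem map_conj_one [DecidableEq l] : (1 : Matrix l l ℂ).map conj = 1 :=
  Matrix.map_one _ (map_zero _) (map_one _)

end Conj

variable {n : Type*} [Fintype n] [DecidableEq n]

def IsSkewConinvolutory (C : Matrix n n ℂ) : Prop := C.map conj * C = -1

theorem IsSkewConinvolutory.submatrix {m : Type*} [Fintype m] [DecidableEq m]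
    {C : Matrix n n ℂ} (hC : C.IsSkewConinvolutory) (e : m ≃ n) :
    (C.submatrix e e).IsSkewConinvolutory := by
  rw [IsSkewConinvolutory, ← submatrix_map, submatrix_mul_equiv, hC, submatrix_neg, Pi.neg_apply,
    Pi.neg_apply, submatrix_one_equiv]

theorem IsSkewConinvolutory.smul {C : Matrix n n ℂ} (hC : C.IsSkewConinvolutory) {u : ℂ}
    (hu : ‖u‖ = 1) : (u • C).IsSkewConinvolutory := by
  rw [IsSkewConinvolutory, map_conj_smul, smul_mul_smul_comm, hC, Complex.conj_mul', hu]
  simp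

theorem isSkewConinvolutory_fromBlocks_zero_zero (G : (Matrix n n ℂ)ˣ) :
    (fromBlocks 0 ((↑G⁻¹ : Matrix n n ℂ).map conj) (-↑G) 0).IsSkewConinvolutory := by
  rw [IsSkewConinvolutory, fromBlocks_map, fromBlocks_multiply, ← fromBlocks_one, fromBlocks_neg]
  simp only [map_conj_map_conj, map_conj_neg, Matrix.map_zero, map_zero]
  simp

theorem isSkewConinvolutory_fromBlocks_ofReal (X : Matrix n n ℂ) {r : ℝ} (hr : r ≠ 0) :
    (fromBlocks (X.map conj) ((r : ℂ) • 1) (-((r : ℂ)⁻¹ • (1 + X * X.map conj)))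
      (-X)).IsSkewConinvolutory := by
  have hr' : (r : ℂ) ≠ 0 := by exact_mod_cast hr
  rw [IsSkewConinvolutory, fromBlocks_map, fromBlocks_multiply, ← fromBlocks_one, fromBlocks_neg]
  simp only [map_conj_smul, map_conj_neg, map_conj_add, map_conj_one,
    Matrix.map_mul, map_conj_map_conj, Complex.conj_ofReal, map_inv₀, smul_mul_assoc,
    mul_smul_comm, mul_add, add_mul, one_mul, mul_one, neg_mul, mul_neg, mul_assoc]
  congr 1 <;> match_scalars <;> field_simp <;> ring

section Operator

open scoped Matrix.Norms.Operator

theorem linfty_opNorm_map_conj {l m : Type*} [Fintype l] [Fintype m] (M : Matrix l m ℂ) :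
    ‖M.map conj‖ = ‖M‖ := by
  simp [linfty_opNorm_def]

theorem exists_units_add_eq_and_map_conj_inv_add_eq [Nonempty n] (A₁₂ A₂₁ M₁ M₂ : Matrix n n ℂ) :
    ∃ r : ℝ, 0 < r ∧ ∃ G G' : (Matrix n n ℂ)ˣ,
      (G + G' : Matrix n n ℂ) = -A₂₁ - (r : ℂ)⁻¹ • M₁ + (Complex.I * r) • 1 ∧
      (↑G⁻¹ + ↑G'⁻¹ : Matrix n n ℂ).map conj = A₁₂ + (Complex.I / r) • M₂ - (r : ℂ) • 1 := by
  have : CompleteSpace (Matrix n n ℂ) := FiniteDimensional.complete ℂ _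
  set K := ‖A₁₂‖ + ‖M₂‖ + ‖A₂₁‖ + ‖M₁‖
  set r : ℝ := 8 * (K + 1)
  have hr : 1 ≤ r := by linarith [show 0 ≤ K by positivity]
  have hr0 : 0 < r := by positivity
  have hr_inv : ‖(r : ℂ)⁻¹‖ ≤ 1 := by
    rw [norm_inv, Complex.norm_real, Real.norm_of_nonneg hr0.le]
    exact inv_le_one_of_one_le₀ hr
  have hIr : ‖Complex.I / r‖ ≤ 1 := by rwa [div_eq_mul_inv, norm_mul, Complex.norm_I, one_mul]
  have hp : ‖(A₁₂ + (Complex.I / r) • M₂).map conj‖ ≤ K := by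
    rw [linfty_opNorm_map_conj]
    grw [norm_add_le, norm_smul, hIr]
    linarith [norm_nonneg A₂₁, norm_nonneg M₁]
  have hs : ‖-A₂₁ - (r : ℂ)⁻¹ • M₁‖ ≤ K := by
    grw [norm_sub_le, norm_neg, norm_smul, hr_inv]
    linarith [norm_nonneg A₁₂, norm_nonneg M₂]
  obtain ⟨G, G', hG, hG'⟩ := exists_units_add_eq_and_inv_add_eq_of_norm_le
    (a := -(r : ℂ)) (b := Complex.I * r) (by simp [abs_of_pos hr0]; rfl)
    (by simp [abs_of_pos hr0]; rfl) hp hs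
  refine ⟨r, hr0, G, G', hG, ?_⟩
  rw [hG', map_conj_add, map_conj_map_conj, map_conj_smul, map_conj_one, map_neg,
    Complex.conj_ofReal, neg_smul, sub_eq_add_neg]

end Operator

theorem exists_isSkewConinvolutory_sum_eq (B : Matrix (n ⊕ n) (n ⊕ n) ℂ) :
    ∃ C : Fin 4 → Matrix (n ⊕ n) (n ⊕ n) ℂ, (∀ i, (C i).IsSkewConinvolutory) ∧ ∑ i, C i = B := by
  cases isEmpty_or_nonempty n
  · exact ⟨0, fun _ ↦ Subsingleton.elim _ _, Subsingleton.elim _ _⟩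
  obtain ⟨A₁₁, A₁₂, A₂₁, A₂₂, rfl⟩ : ∃ A₁₁ A₁₂ A₂₁ A₂₂, fromBlocks A₁₁ A₁₂ A₂₁ A₂₂ = B :=
    ⟨_, _, _, _, fromBlocks_toBlocks B⟩
  -- `X̄ - I Y = A₁₁` and `-X + I Ȳ = A₂₂`
  set X : Matrix n n ℂ := (2⁻¹ : ℂ) • (A₁₁.map conj - A₂₂)
  set Y : Matrix n n ℂ := (Complex.I / 2) • (A₁₁ + A₂₂.map conj)
  obtain ⟨r, hr, G, G', hG, hG'⟩ :=
    exists_units_add_eq_and_map_conj_inv_add_eq A₁₂ A₂₁ (1 + X * X.map conj) (1 + Y * Y.map conj)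
  refine ⟨![fromBlocks (X.map conj) ((r : ℂ) • 1) (-((r : ℂ)⁻¹ • (1 + X * X.map conj))) (-X),
    Complex.I • (fromBlocks (Y.map conj) ((r : ℂ) • 1) (-((r : ℂ)⁻¹ • (1 + Y * Y.map conj)))
      (-Y)).submatrix Sum.swap Sum.swap,
    fromBlocks 0 ((↑G⁻¹ : Matrix n n ℂ).map conj) (-↑G) 0,
    fromBlocks 0 ((↑G'⁻¹ : Matrix n n ℂ).map conj) (-↑G') 0], ?_, ?_⟩
  · intro i
    fin_cases i
    · exact isSkewConinvolutory_fromBlocks_ofReal X hr.ne'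
    · exact ((isSkewConinvolutory_fromBlocks_ofReal Y hr.ne').submatrix
        (Equiv.sumComm n n)).smul (by simp)
    · exact isSkewConinvolutory_fromBlocks_zero_zero G
    · exact isSkewConinvolutory_fromBlocks_zero_zero G'
  · rw [Fin.sum_univ_four]
    simp only [cons_val, fromBlocks_submatrix_sum_swap_sum_swap, fromBlocks_smul, fromBlocks_add]
    congr 1
    · simp only [X, Y, map_conj_smul, map_conj_sub, map_conj_map_conj, map_inv₀, map_ofNat,
        add_zero]
      match_scalars <;> linear_combination (-1 / 2 : ℂ) * Complex.I_sq
    · rw [add_assoc, ← map_conj_add, hG']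
      match_scalars <;> ring
    · rw [add_assoc, ← neg_add, hG]
      match_scalars <;> ring
    · simp only [X, Y, map_conj_smul, map_conj_add, map_conj_map_conj, map_ofNat, map_div₀,
        Complex.conj_I, add_zero]
      match_scalars <;> linear_combination (-1 / 2 : ℂ) * Complex.I_sq

end Matrix

theorem sum_at_most_five_skew_coninvolutory (m : ℕ)
    (A : Matrix (Fin (2 * m)) (Fin (2 * m)) ℂ) :
    ∃ k : ℕ, k ≤ 5 ∧ ∃ C : Fin k → Matrix (Fin (2 * m)) (Fin (2 * m)) ℂ,
      (∀ i, (C i).map (starRingEnd ℂ) * C i = -1) ∧ A = ∑ i, C i := by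
  let e : Fin (2 * m) ≃ Fin m ⊕ Fin m := (finCongr (two_mul m)).trans finSumFinEquiv.symm
  obtain ⟨C, hC, hsum⟩ := Matrix.exists_isSkewConinvolutory_sum_eq (A.submatrix e.symm e.symm)
  refine ⟨4, by norm_num, fun i ↦ (C i).submatrix e e, fun i ↦ (hC i).submatrix e, ?_⟩
  calc A = (∑ i, C i).submatrix e e := by simp [hsum]
    _ = ∑ i, (C i).submatrix e e := by ext; simp [Matrix.sum_apply]
end
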